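/- Let p ≥ 2 and B(x) = a_c + Σ_{m=0}^{L} a_m T_{p^m}(x), and let B_l(x) = B(T_{p^l}(x)) for l ≥ 1. Then ⟨B·B_l⟩ = a_c² + (1/2) Σ_{m=l}^{L} a_m a_{m−l} with respect to dx/(π√(1−x²)) on [−1,1] (where the sum is empty if l > L). -/

import Mathlib

/-!
Under the Chebyshev weight the `T_n` are orthogonal, with `⟨T_0²⟩ = 1` and `⟨T_n²⟩ = 1/2` for
`n ≠ 0`. Since `T_m ∘ T_n = T_{mn}`, the composed series is `B_l = a_c + Σ a_m T_{p^(m+l)}`, so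
only the constant terms and the pairs with `p^m = p^(n+l)`, i.e. `m = n + l` as `p ≥ 2`,
survive in `⟨B·B_l⟩`.
-/

open Polynomial Polynomial.Chebyshev MeasureTheory Finset
open Real

theorem eval_T_eval_T {R : Type*} [CommRing R] (m n : ℕ) (x : R) :
    (T R m).eval ((T R n).eval x) = (T R (m * n : ℕ)).eval x := by
  rw [Nat.cast_mul, T_mul, eval_comp]

theorem setIntegral_Icc_mul_weight_eq_integral_measureT_div_pi (f : ℝ → ℝ) :
    ∫ x in Set.Icc (-1 : ℝ) 1, f x * (1 / (π * √(1 - x ^ 2))) = (∫ x, f x ∂measureT) / π := by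
  rw [integral_measureT, intervalIntegral.integral_of_le (by norm_num),
    integral_Icc_eq_integral_Ioc, ← integral_div]
  congr 1 with x
  rw [Real.sqrt_inv]
  ring

theorem integral_measureT_const (a : ℝ) : ∫ _x, a ∂measureT = π * a := by
  have := integral_eval_T_real_measureT_zero
  simp only [T_zero, eval_one, integral_const, smul_eq_mul, mul_one] at this
  rw [integral_const, smul_eq_mul, this]

theorem integral_sum_eval_T_real_measureT {ι : Type*} (s : Finset ι) (c : ι → ℝ) (f : ι → ℕ)
    (hf : ∀ i ∈ s, f i ≠ 0) :
    ∫ x, ∑ i ∈ s, c i * (T ℝ (f i)).eval x ∂measureT = 0 := by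
  rw [integral_finsetSum _ fun i _ => integrable_measureT (by fun_prop)]
  refine sum_eq_zero fun i hi => ?_
  rw [integral_const_mul, integral_eval_T_real_measureT_of_ne_zero (by exact_mod_cast hf i hi),
    mul_zero]

theorem integral_sum_eval_T_real_mul_sum_eval_T_real_measureT {ι κ : Type*} (s : Finset ι)
    (t : Finset κ) (c : ι → ℝ) (d : κ → ℝ) (f : ι → ℕ) (g : κ → ℕ) (hf : ∀ i ∈ s, f i ≠ 0) :
    ∫ x, (∑ i ∈ s, c i * (T ℝ (f i)).eval x) * (∑ j ∈ t, d j * (T ℝ (g j)).eval x) ∂measureT =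
      π / 2 * ∑ i ∈ s, ∑ j ∈ t, if f i = g j then c i * d j else 0 := by
  simp_rw [sum_mul_sum, mul_sum, mul_mul_mul_comm (c _)]
  rw [integral_finsetSum _ fun i _ => integrable_measureT (by fun_prop)]
  refine sum_congr rfl fun i hi => ?_
  rw [integral_finsetSum _ fun j _ => integrable_measureT (by fun_prop)]
  refine sum_congr rfl fun j _ => ?_
  rw [integral_const_mul]
  split_ifs with h
  · rw [← h, integral_T_real_mul_self_measureT_of_ne_zero (hf i hi)]
    ring
  · rw [integral_eval_T_real_mul_eval_T_real_measureT_of_ne h, mul_zero, mul_zero]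

theorem integral_const_add_mul_const_add_measureT {S U : ℝ → ℝ} (hS : Continuous S)
    (hU : Continuous U) (hS₀ : ∫ x, S x ∂measureT = 0) (hU₀ : ∫ x, U x ∂measureT = 0) (a b : ℝ) :
    ∫ x, (a + S x) * (b + U x) ∂measureT = π * a * b + ∫ x, S x * U x ∂measureT := by
  have expand : ∀ x, (a + S x) * (b + U x) = a * b + a * U x + b * S x + S x * U x := fun x => by
    ring
  simp_rw [expand]
  rw [integral_add (integrable_measureT (by fun_prop)) (integrable_measureT (by fun_prop)),
    integral_add (integrable_measureT (by fun_prop)) (integrable_measureT (by fun_prop)),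
    integral_add (integrable_measureT (by fun_prop)) (integrable_measureT (by fun_prop)),
    integral_const_mul, integral_const_mul, integral_const_mul, integral_measureT_const, hS₀, hU₀]
  ring

theorem integral_const_add_sum_eval_T_real_mul_const_add_sum_eval_T_real_measureT
    {ι κ : Type*} (s : Finset ι) (t : Finset κ) (a b : ℝ) (c : ι → ℝ) (d : κ → ℝ)
    (f : ι → ℕ) (g : κ → ℕ) (hf : ∀ i ∈ s, f i ≠ 0) (hg : ∀ j ∈ t, g j ≠ 0) :
    ∫ x, (a + ∑ i ∈ s, c i * (T ℝ (f i)).eval x) * (b + ∑ j ∈ t, d j * (T ℝ (g j)).eval x)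
        ∂measureT =
      π * a * b + π / 2 * ∑ i ∈ s, ∑ j ∈ t, if f i = g j then c i * d j else 0 := by
  rw [integral_const_add_mul_const_add_measureT (by fun_prop) (by fun_prop)
    (integral_sum_eval_T_real_measureT s c f hf) (integral_sum_eval_T_real_measureT t d g hg),
    integral_sum_eval_T_real_mul_sum_eval_T_real_measureT s t c d f g hf]

theorem sum_range_sum_range_ite_eq_add {M : Type*} [AddCommMonoid M] (F : ℕ → ℕ → M) (L l : ℕ) :
    ∑ m ∈ range (L + 1), ∑ n ∈ range (L + 1), (if m = n + l then F m n else 0) =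
      ∑ m ∈ Icc l L, F m (m - l) := by
  rw [sum_comm]
  simp_rw [sum_ite_eq']
  rw [← sum_filter]
  refine sum_nbij' (· + l) (· - l) ?_ ?_ ?_ ?_ ?_ <;> intro n hn <;> simp_all
  omega

theorem chebyshev_lacunary_correlation_general
    (L : ℕ) (ac : ℝ) (a : ℕ → ℝ) (p : ℕ) (hp : 2 ≤ p) (l : ℕ)
    (B : ℝ → ℝ)
    (hB : ∀ x, B x = ac + ∑ m ∈ range (L + 1), a m * (T ℝ (p ^ m : ℕ)).eval x) :
    ∫ x in Set.Icc (-1 : ℝ) 1,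
        B x * B ((T ℝ (p ^ l : ℕ)).eval x) * (1 / (Real.pi * Real.sqrt (1 - x ^ 2)))
      = ac ^ 2 + (1 / 2) * ∑ m ∈ Icc l L, a m * a (m - l) := by
  have hp₀ (m : ℕ) : p ^ m ≠ 0 := pow_ne_zero m (by omega)
  have hBl (x : ℝ) : B ((T ℝ (p ^ l : ℕ)).eval x) =
      ac + ∑ m ∈ range (L + 1), a m * (T ℝ (p ^ (m + l) : ℕ)).eval x := by
    simp_rw [hB, eval_T_eval_T, ← pow_add]
  simp_rw [setIntegral_Icc_mul_weight_eq_integral_measureT_div_pi, hBl, hB]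
  rw [integral_const_add_sum_eval_T_real_mul_const_add_sum_eval_T_real_measureT _ _ _ _ _ _ _ _
    (fun m _ => hp₀ m) (fun m _ => hp₀ _)]
  simp_rw [Nat.pow_right_inj (by omega : 1 < p)]
  rw [sum_range_sum_range_ite_eq_add (fun m n => a m * a n)]
  field_simp

/-- two-point correlation `⟨B·B_l⟩` for `B = a_c + Σ_{m=0}^L a_m T_{p^m}`
and `B_l = B ∘ T_{p^l}`. -/
theorem chebyshev_lacunary_correlation
    (L : ℕ) (ac : ℝ) (a : ℕ → ℝ) (p : ℕ) (hp : 2 ≤ p) (l : ℕ) (hl : 1 ≤ l)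
    (B : ℝ → ℝ)
    (hB : ∀ x, B x = ac + ∑ m ∈ range (L + 1), a m * (T ℝ (p ^ m : ℕ)).eval x) :
    ∫ x in Set.Icc (-1 : ℝ) 1,
        B x * B ((T ℝ (p ^ l : ℕ)).eval x) * (1 / (Real.pi * Real.sqrt (1 - x ^ 2)))
      = ac ^ 2 + (1 / 2) * ∑ m ∈ Icc l L, a m * a (m - l) :=
  chebyshev_lacunary_correlation_general L ac a p hp l B hB
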